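/- arXiv:2405.15613 — 5 statements merged into one kernel-verified Lean document; each statement's English description precedes it below -/
import Mathlib

section
/- Let P be a probability distribution with density p supported on a compact set Ω, let t ∈ (0,1), let Q be the probability distribution with density q = p^t / Z where Z = ∫ p^t, and let U be the uniform distribution on Ω. Then D_KL(Q‖U) ≤ D_KL(P‖U). -/
open MeasureTheory Real

/-- Lemma 1 (inequality part): tempering a density with exponent `t ∈ (0,1)` does not
increase the KL divergence to the uniform distribution on the compact support `Ω`. -/
theorem kl_tempered_le_kl {d : ℕ} (Ω : Set (EuclideanSpace ℝ (Fin d)))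
    (hΩ : IsCompact Ω) (hvol : 0 < (volume Ω).toReal)
    (p : EuclideanSpace ℝ (Fin d) → ℝ) (hp : Measurable p)
    (hp0 : ∀ x, 0 ≤ p x) (hsupp : ∀ x ∉ Ω, p x = 0)
    (hp1 : ∫ x, p x = 1)
    (t : ℝ) (ht : t ∈ Set.Ioo (0 : ℝ) 1)
    (Z : ℝ) (hZ : Z = ∫ x, p x ^ t) (hZpos : 0 < Z)
    (q u : EuclideanSpace ℝ (Fin d) → ℝ)
    (hq : ∀ x, q x = p x ^ t / Z)
    (hu : ∀ x, u x = Ω.indicator (fun _ => ((volume Ω).toReal)⁻¹) x)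
    (hint_q : Integrable (fun x => q x * Real.log (q x / u x)))
    (hint_p : Integrable (fun x => p x * Real.log (p x / u x))) :
    ∫ x, q x * Real.log (q x / u x) ≤ ∫ x, p x * Real.log (p x / u x) := by
  obtain ⟨ht0, ht1⟩ := ht
  have hqe : q = fun x => p x ^ t / Z := funext hq
  have hue : u = fun x => Ω.indicator (fun _ => ((volume Ω).toReal)⁻¹) x := funext hu
  subst hqe hue
  set V : ℝ := (volume Ω).toReal with hVdef
  have hVpos : 0 < V := hvol
  have htne : t ≠ 0 := ht0.ne'
  -- integrability of p and p^t
  have hip : Integrable p := by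
    by_contra h
    rw [integral_undef h] at hp1; norm_num at hp1
  have hipt : Integrable fun x => p x ^ t := by
    by_contra h
    rw [integral_undef h] at hZ
    exact absurd hZ hZpos.ne'
  have hiq : Integrable fun x => p x ^ t / Z := hipt.div_const Z
  have hq1 : ∫ x, p x ^ t / Z = 1 := by
    rw [integral_div, ← hZ, div_self hZpos.ne']
  -- pointwise identities
  have key1 : ∀ x, p x * Real.log (p x / Ω.indicator (fun _ => V⁻¹) x)
      = p x * Real.log (p x) + p x * Real.log V := by
    intro x
    by_cases hx : x ∈ Ω
    · rw [Set.indicator_of_mem hx]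
      rcases eq_or_lt_of_le (hp0 x) with h0 | h0
      · simp [← h0]
      · rw [Real.log_div h0.ne' (inv_ne_zero hVpos.ne'), Real.log_inv]; ring
    · rw [hsupp x hx]; ring
  have key2 : ∀ x, (p x ^ t / Z) * Real.log ((p x ^ t / Z) / Ω.indicator (fun _ => V⁻¹) x)
      = t * ((p x ^ t / Z) * Real.log (p x)) - (p x ^ t / Z) * Real.log Z
        + (p x ^ t / Z) * Real.log V := by
    intro x
    by_cases hx : x ∈ Ω
    · rw [Set.indicator_of_mem hx]
      rcases eq_or_lt_of_le (hp0 x) with h0 | h0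
      · simp [← h0, Real.zero_rpow htne]
      · have hpt : (0:ℝ) < p x ^ t := Real.rpow_pos_of_pos h0 t
        rw [Real.log_div (by positivity) (inv_ne_zero hVpos.ne'), Real.log_inv,
          Real.log_div hpt.ne' hZpos.ne', Real.log_rpow h0]
        ring
    · rw [hsupp x hx, Real.zero_rpow htne]; simp
  -- integrability of p log p and q log p
  have hiplp : Integrable fun x => p x * Real.log (p x) := by
    have h := hint_p.sub (hip.mul_const (Real.log V))
    have he : (fun x => p x * Real.log (p x))
        = fun x => p x * Real.log (p x / Ω.indicator (fun _ => V⁻¹) x)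
          - p x * Real.log V := by
      funext x; rw [key1 x]; ring
    rw [he]; exact h
  have hiqlp : Integrable fun x => (p x ^ t / Z) * Real.log (p x) := by
    have h := (((hint_q.add (hiq.mul_const (Real.log Z))).sub
      (hiq.mul_const (Real.log V))).const_mul t⁻¹)
    have he : (fun x => (p x ^ t / Z) * Real.log (p x))
        = fun x => t⁻¹ * ((p x ^ t / Z) * Real.log ((p x ^ t / Z) / Ω.indicator (fun _ => V⁻¹) x)
          + (p x ^ t / Z) * Real.log Z - (p x ^ t / Z) * Real.log V) := by
      funext x; rw [key2 x]; field_simp; ring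
    rw [he]; exact h
  set A : ℝ := ∫ x, p x * Real.log (p x) with hA
  set Bq : ℝ := ∫ x, (p x ^ t / Z) * Real.log (p x) with hB
  -- integral identities
  have hIp : ∫ x, p x * Real.log (p x / Ω.indicator (fun _ => V⁻¹) x)
      = A + Real.log V := by
    have : (fun x => p x * Real.log (p x / Ω.indicator (fun _ => V⁻¹) x))
        = fun x => p x * Real.log (p x) + p x * Real.log V := funext key1
    rw [this, integral_add hiplp (hip.mul_const _), integral_mul_const, hp1, one_mul]
  have hIq : ∫ x, (p x ^ t / Z) * Real.log ((p x ^ t / Z) / Ω.indicator (fun _ => V⁻¹) x)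
      = t * Bq - Real.log Z + Real.log V := by
    have he : (fun x => (p x ^ t / Z) * Real.log ((p x ^ t / Z) / Ω.indicator (fun _ => V⁻¹) x))
        = fun x => t * ((p x ^ t / Z) * Real.log (p x)) - (p x ^ t / Z) * Real.log Z
          + (p x ^ t / Z) * Real.log V := funext key2
    have i1 : Integrable fun x => t * (p x ^ t / Z * Real.log (p x)) := hiqlp.const_mul t
    have i2 : Integrable fun x => p x ^ t / Z * Real.log Z := hiq.mul_const _
    have i3 : Integrable fun x => p x ^ t / Z * Real.log V := hiq.mul_const _
    have i4 : Integrable fun x => t * (p x ^ t / Z * Real.log (p x)) - p x ^ t / Z * Real.log Z :=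
      i1.sub i2
    rw [he, integral_add i4 i3, integral_sub i1 i2, integral_const_mul,
      integral_mul_const, integral_mul_const, hq1, one_mul, one_mul]
  -- Gibbs inequality 1 : D(P||Q) ≥ 0, i.e. ∫ p log(q/p) ≤ 0
  have hGA : (t - 1) * A - Real.log Z ≤ 0 := by
    have hmono : ∫ x, ((t - 1) * (p x * Real.log (p x)) - p x * Real.log Z)
        ≤ ∫ x, (p x ^ t / Z - p x) := by
      apply integral_mono ((hiplp.const_mul _).sub (hip.mul_const _)) (hiq.sub hip)
      intro x
      rcases eq_or_lt_of_le (hp0 x) with h0 | h0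
      · simp [← h0, Real.zero_rpow htne]
      · have hpt : (0:ℝ) < p x ^ t / Z := div_pos (Real.rpow_pos_of_pos h0 t) hZpos
        have h3 := Real.log_le_sub_one_of_pos (div_pos hpt h0)
        have h4 := mul_le_mul_of_nonneg_left h3 h0.le
        have h5 : p x * (p x ^ t / Z / p x - 1) = p x ^ t / Z - p x := by
          field_simp
        have h6 : Real.log (p x ^ t / Z / p x)
            = (t - 1) * Real.log (p x) - Real.log Z := by
          rw [Real.log_div hpt.ne' h0.ne',
            Real.log_div (Real.rpow_pos_of_pos h0 t).ne' hZpos.ne', Real.log_rpow h0]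
          ring
        rw [h6, h5] at h4
        calc (t - 1) * (p x * Real.log (p x)) - p x * Real.log Z
            = p x * ((t - 1) * Real.log (p x) - Real.log Z) := by ring
          _ ≤ p x ^ t / Z - p x := h4
    rw [integral_sub (hiplp.const_mul _) (hip.mul_const _), integral_sub hiq hip,
      integral_const_mul, integral_mul_const, hq1, hp1, one_mul] at hmono
    linarith
  -- Gibbs inequality 2 : D(Q||P) ≥ 0, i.e. ∫ q log(p/q) ≤ 0
  have hGB : (1 - t) * Bq + Real.log Z ≤ 0 := by
    have hmono : ∫ x, ((1 - t) * ((p x ^ t / Z) * Real.log (p x)) + (p x ^ t / Z) * Real.log Z)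
        ≤ ∫ x, (p x - p x ^ t / Z) := by
      apply integral_mono ((hiqlp.const_mul _).add (hiq.mul_const _)) (hip.sub hiq)
      intro x
      rcases eq_or_lt_of_le (hp0 x) with h0 | h0
      · simp [← h0, Real.zero_rpow htne]
      · have hpt : (0:ℝ) < p x ^ t / Z := div_pos (Real.rpow_pos_of_pos h0 t) hZpos
        have h3 := Real.log_le_sub_one_of_pos (div_pos h0 hpt)
        have h4 := mul_le_mul_of_nonneg_left h3 hpt.le
        have h5 : (p x ^ t / Z) * (p x / (p x ^ t / Z) - 1) = p x - p x ^ t / Z := by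
          field_simp
        have h6 : Real.log (p x / (p x ^ t / Z))
            = (1 - t) * Real.log (p x) + Real.log Z := by
          rw [Real.log_div h0.ne' hpt.ne',
            Real.log_div (Real.rpow_pos_of_pos h0 t).ne' hZpos.ne', Real.log_rpow h0]
          ring
        rw [h6, h5] at h4
        calc (1 - t) * ((p x ^ t / Z) * Real.log (p x)) + (p x ^ t / Z) * Real.log Z
            = (p x ^ t / Z) * ((1 - t) * Real.log (p x) + Real.log Z) := by ring
          _ ≤ p x - p x ^ t / Z := h4
    rw [integral_add (hiqlp.const_mul _) (hiq.mul_const _), integral_sub hip hiq,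
      integral_const_mul, integral_mul_const, hq1, hp1, one_mul] at hmono
    linarith
  rw [hIp, hIq]
  nlinarith [mul_le_mul_of_nonneg_left hGB ht0.le, hGA,
    mul_pos ht0 (sub_pos.mpr ht1), sub_pos.mpr ht1]
end

section
/- Let p be a probability density on a measure space with finite negative differential entropy, t ∈ (0,1), Z = ∫ p^t ∈ (0,∞), and q = p^t/Z. Then ∫ q log q ≤ ∫ p log p, i.e., tempering a density with exponent t < 1 does not decrease its differential entropy. -/
open MeasureTheory Real

/-- Gibbs' inequality: for nonnegative densities with matching zero sets and
`∫ g ≤ ∫ f`, we have `∫ f log g ≤ ∫ f log f`. -/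
lemma gibbs_aux {α : Type*} [MeasurableSpace α] (μ : Measure α)
    (f g : α → ℝ) (hf0 : ∀ x, 0 ≤ f x) (hg0 : ∀ x, 0 ≤ g x)
    (hzero : ∀ x, g x = 0 → f x = 0)
    (hfi : Integrable f μ) (hgi : Integrable g μ)
    (hInt : ∫ x, g x ∂μ ≤ ∫ x, f x ∂μ)
    (h1 : Integrable (fun x => f x * Real.log (f x)) μ)
    (h2 : Integrable (fun x => f x * Real.log (g x)) μ) :
    ∫ x, f x * Real.log (g x) ∂μ ≤ ∫ x, f x * Real.log (f x) ∂μ := by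
  have key : ∫ x, (f x * Real.log (g x) - f x * Real.log (f x)) ∂μ
      ≤ ∫ x, (g x - f x) ∂μ := by
    refine integral_mono (h2.sub h1) (hgi.sub hfi) fun x => ?_
    rcases (hf0 x).eq_or_lt with h | h
    · simp [← h, hg0 x]
    · have hg : 0 < g x :=
        lt_of_le_of_ne (hg0 x) (Ne.symm fun e => h.ne' (hzero x e))
      have hlog := Real.log_le_sub_one_of_pos (show 0 < g x / f x by positivity)
      rw [Real.log_div hg.ne' h.ne'] at hlog
      have h2' := mul_le_mul_of_nonneg_left hlog (hf0 x)
      calc f x * Real.log (g x) - f x * Real.log (f x)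
          = f x * (Real.log (g x) - Real.log (f x)) := by ring
        _ ≤ f x * (g x / f x - 1) := h2'
        _ = g x - f x := by field_simp
  rw [integral_sub h2 h1, integral_sub hgi hfi] at key
  linarith

/-- Tempering a probability density with exponent `t ∈ (0,1)` does not decrease its
differential entropy: `∫ q log q ≤ ∫ p log p` where `q = p^t / Z`. -/
theorem tempered_entropy_ge {α : Type*} [MeasurableSpace α] (μ : Measure α)
    [SigmaFinite μ]
    (p : α → ℝ) (hp : Measurable p) (hp0 : ∀ x, 0 ≤ p x)
    (hp1 : ∫ x, p x ∂μ = 1)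
    (t : ℝ) (ht : t ∈ Set.Ioo (0 : ℝ) 1)
    (Z : ℝ) (hZ : Z = ∫ x, p x ^ t ∂μ) (hZpos : 0 < Z)
    (q : α → ℝ) (hq : ∀ x, q x = p x ^ t / Z)
    (hint_p : Integrable (fun x => p x * |Real.log (p x)|) μ)
    (hint_q : Integrable (fun x => q x * |Real.log (q x)|) μ) :
    ∫ x, q x * Real.log (q x) ∂μ ≤ ∫ x, p x * Real.log (p x) ∂μ := by
  obtain ⟨ht0, ht1⟩ := ht
  have hq0 : ∀ x, 0 ≤ q x := fun x => by
    rw [hq x]; exact div_nonneg (Real.rpow_nonneg (hp0 x) t) hZpos.le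
  have hptm : Measurable (fun x => p x ^ t) := by
    have hpe : (fun x => p x ^ t)
        = fun x => if p x = 0 then 0 else Real.exp (t * Real.log (p x)) := by
      funext x
      split_ifs with h
      · rw [h, Real.zero_rpow ht0.ne']
      · rw [Real.rpow_def_of_pos (lt_of_le_of_ne (hp0 x) (Ne.symm h)) t, mul_comm]
    rw [hpe]
    exact Measurable.ite (hp (measurableSet_singleton 0)) measurable_const
      (Real.measurable_exp.comp (measurable_const.mul (Real.measurable_log.comp hp)))
  have hqm : Measurable q := by
    have hqe : q = fun x => p x ^ t / Z := funext hq
    rw [hqe]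
    exact hptm.div_const Z
  -- p and q are integrable
  have hpi : Integrable p μ := by
    by_contra h
    rw [integral_undef h] at hp1
    norm_num at hp1
  have hpt_int : Integrable (fun x => p x ^ t) μ := by
    by_contra h
    rw [integral_undef h] at hZ
    exact absurd hZ hZpos.ne'
  have hqi : Integrable q μ :=
    (hpt_int.div_const Z).congr (ae_of_all _ fun x => (hq x).symm)
  have hq1 : ∫ x, q x ∂μ = 1 := by
    rw [funext hq, integral_div, ← hZ, div_self hZpos.ne']
  -- zero sets coincide
  have hpq0 : ∀ x, p x = 0 ↔ q x = 0 := fun x => by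
    rw [hq x, div_eq_zero_iff, Real.rpow_eq_zero (hp0 x) ht0.ne']
    exact ⟨fun h => Or.inl h, fun h => h.resolve_right hZpos.ne'⟩
  -- log relation on {p > 0}
  have hlogq : ∀ x, 0 < p x → Real.log (q x) = t * Real.log (p x) - Real.log Z := by
    intro x hx
    rw [hq x, Real.log_div (Real.rpow_pos_of_pos hx t).ne' hZpos.ne', Real.log_rpow hx]
  -- integrability of x log x terms
  have hplogp_int : Integrable (fun x => p x * Real.log (p x)) μ := by
    refine hint_p.mono ((hp.mul (Real.measurable_log.comp hp)).aestronglyMeasurable)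
      (ae_of_all _ fun x => ?_)
    simp [Real.norm_eq_abs, abs_mul, abs_abs, abs_of_nonneg (hp0 x)]
  have hqlogq_int : Integrable (fun x => q x * Real.log (q x)) μ := by
    refine hint_q.mono ((hqm.mul (Real.measurable_log.comp hqm)).aestronglyMeasurable)
      (ae_of_all _ fun x => ?_)
    simp [Real.norm_eq_abs, abs_mul, abs_abs, abs_of_nonneg (hq0 x)]
  -- identity for p * log q
  have id1 : (fun x => p x * Real.log (q x))
      = fun x => t * (p x * Real.log (p x)) - Real.log Z * p x := by
    funext x
    rcases (hp0 x).eq_or_lt with h | h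
    · simp [← h]
    · rw [hlogq x h]; ring
  have hplogq_int : Integrable (fun x => p x * Real.log (q x)) μ := by
    rw [id1]; exact (hplogp_int.const_mul t).sub (hpi.const_mul (Real.log Z))
  have e1 : ∫ x, p x * Real.log (q x) ∂μ
      = t * (∫ x, p x * Real.log (p x) ∂μ) - Real.log Z := by
    rw [id1, integral_sub (hplogp_int.const_mul t) (hpi.const_mul _),
      integral_const_mul, integral_const_mul, hp1, mul_one]
  -- identity for q * log p
  have id2 : (fun x => q x * Real.log (p x))
      = fun x => (1 / t) * (q x * Real.log (q x)) + (Real.log Z / t) * q x := by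
    funext x
    rcases (hp0 x).eq_or_lt with h | h
    · have hqx : q x = 0 := (hpq0 x).mp h.symm
      simp [hqx]
    · rw [hlogq x h]; field_simp; ring
  have hqlogp_int : Integrable (fun x => q x * Real.log (p x)) μ := by
    rw [id2]; exact (hqlogq_int.const_mul _).add (hqi.const_mul _)
  have e2 : ∫ x, q x * Real.log (p x) ∂μ
      = (1 / t) * (∫ x, q x * Real.log (q x) ∂μ) + Real.log Z / t := by
    rw [id2, integral_add (hqlogq_int.const_mul _) (hqi.const_mul _),
      integral_const_mul, integral_const_mul, hq1, mul_one]
  -- two Gibbs inequalities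
  have G1 : ∫ x, p x * Real.log (q x) ∂μ ≤ ∫ x, p x * Real.log (p x) ∂μ :=
    gibbs_aux μ p q hp0 hq0 (fun x e => (hpq0 x).mpr e) hpi hqi
      (by rw [hq1, hp1]) hplogp_int hplogq_int
  have G2 : ∫ x, q x * Real.log (p x) ∂μ ≤ ∫ x, q x * Real.log (q x) ∂μ :=
    gibbs_aux μ q p hq0 hp0 (fun x e => (hpq0 x).mp e) hqi hpi
      (by rw [hq1, hp1]) hqlogq_int hqlogp_int
  set A := ∫ x, p x * Real.log (p x) ∂μ
  set B := ∫ x, q x * Real.log (q x) ∂μ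
  rw [e1] at G1
  rw [e2] at G2
  -- from G1 : t*A - log Z ≤ A ; from G2 : (1/t)*B + log Z/t ≤ B
  have h2' : B + Real.log Z ≤ B * t := by
    have := mul_le_mul_of_nonneg_left G2 ht0.le
    field_simp at this
    linarith
  have hlt : 0 < 1 - t := by linarith
  have hfin : B * (1 - t) ≤ A * (1 - t) := by nlinarith
  exact le_of_mul_le_mul_right hfin hlt
end

section
/- With the same setup, the sequence D_KL(Q_T‖U) is nonincreasing in T, where Q_T has density q_T = p^{s^T}/Z_T, s ∈ (0,1), and U is uniform on Ω. -/
open MeasureTheory Real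


lemma integrable_bdd {α : Type*} [MeasurableSpace α] {ν : Measure α} [IsFiniteMeasure ν]
    {f : α → ℝ} (hf : AEMeasurable f ν) {lo hi : ℝ}
    (h : ∀ᵐ x ∂ν, lo ≤ f x ∧ f x ≤ hi) : Integrable f ν := by
  refine Integrable.mono' (integrable_const (max |lo| |hi|)) hf.aestronglyMeasurable ?_
  filter_upwards [h] with x hx
  simpa using abs_le_max_abs_abs hx.1 hx.2

lemma integrable_mul_log {α : Type*} [MeasurableSpace α] {ν : Measure α} [IsFiniteMeasure ν]
    {f g : α → ℝ} (hf : AEMeasurable f ν) (hg : AEMeasurable g ν)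
    {Hf lg Hg : ℝ} (hlg : 0 < lg)
    (hfb : ∀ᵐ x ∂ν, 0 ≤ f x ∧ f x ≤ Hf) (hgb : ∀ᵐ x ∂ν, lg ≤ g x ∧ g x ≤ Hg) :
    Integrable (fun x => f x * Real.log (g x)) ν := by
  refine Integrable.mono' (integrable_const (|Hf| * max |Real.log lg| |Real.log Hg|))
    (hf.aestronglyMeasurable.mul (Real.measurable_log.comp_aemeasurable hg).aestronglyMeasurable) ?_
  filter_upwards [hfb, hgb] with x hfx hgx
  have hgpos : 0 < g x := lt_of_lt_of_le hlg hgx.1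
  have h1 : |f x| ≤ |Hf| := by
    rw [abs_of_nonneg hfx.1]; exact hfx.2.trans (le_abs_self Hf)
  have h2 : |Real.log (g x)| ≤ max |Real.log lg| |Real.log Hg| :=
    abs_le_max_abs_abs (Real.log_le_log hlg hgx.1) (Real.log_le_log hgpos hgx.2)
  calc ‖f x * Real.log (g x)‖ = |f x| * |Real.log (g x)| := abs_mul _ _
    _ ≤ |Hf| * max |Real.log lg| |Real.log Hg| :=
        mul_le_mul h1 h2 (abs_nonneg _) (abs_nonneg _)

lemma gibbs_ineq {α : Type*} [MeasurableSpace α] {ν : Measure α} [IsFiniteMeasure ν]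
    {f g : α → ℝ} (hf : AEMeasurable f ν) (hg : AEMeasurable g ν)
    {lf Hf lg Hg : ℝ} (hlf : 0 < lf) (hlg : 0 < lg)
    (hfb : ∀ᵐ x ∂ν, lf ≤ f x ∧ f x ≤ Hf) (hgb : ∀ᵐ x ∂ν, lg ≤ g x ∧ g x ≤ Hg)
    (hf1 : ∫ x, f x ∂ν = 1) (hg1 : ∫ x, g x ∂ν = 1) :
    ∫ x, f x * Real.log (g x) ∂ν ≤ ∫ x, f x * Real.log (f x) ∂ν := by
  have hfb' : ∀ᵐ x ∂ν, 0 ≤ f x ∧ f x ≤ Hf := by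
    filter_upwards [hfb] with x hx; exact ⟨hlf.le.trans hx.1, hx.2⟩
  have i1 : Integrable (fun x => f x * Real.log (g x)) ν :=
    integrable_mul_log hf hg hlg hfb' hgb
  have i2 : Integrable (fun x => f x * Real.log (f x)) ν :=
    integrable_mul_log hf hf hlf hfb' hfb
  have iF : Integrable f ν := integrable_bdd hf hfb
  have iG : Integrable g ν := integrable_bdd hg hgb
  have key : ∀ᵐ x ∂ν, f x * Real.log (g x) - f x * Real.log (f x) ≤ g x - f x := by
    filter_upwards [hfb, hgb] with x hfx hgx
    have hfpos : 0 < f x := lt_of_lt_of_le hlf hfx.1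
    have hgpos : 0 < g x := lt_of_lt_of_le hlg hgx.1
    have h1 : Real.log (g x) - Real.log (f x) = Real.log (g x / f x) :=
      (Real.log_div hgpos.ne' hfpos.ne').symm
    have h2 : Real.log (g x / f x) ≤ g x / f x - 1 :=
      Real.log_le_sub_one_of_pos (div_pos hgpos hfpos)
    have h3 : f x * Real.log (g x / f x) ≤ f x * (g x / f x - 1) :=
      mul_le_mul_of_nonneg_left h2 hfpos.le
    have h4 : f x * (g x / f x - 1) = g x - f x := by field_simp
    nlinarith [h3]
  have hmono : ∫ x, (f x * Real.log (g x) - f x * Real.log (f x)) ∂ν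
      ≤ ∫ x, (g x - f x) ∂ν := integral_mono_ae (i1.sub i2) (iG.sub iF) key
  rw [integral_sub i1 i2, integral_sub iG iF, hf1, hg1] at hmono
  linarith

/-- The KL divergence to the uniform distribution is nonincreasing along the iterated
tempering sequence `q_T = p^(s^T)/Z_T`, `s ∈ (0,1)`. -/
theorem kl_iterated_tempering_antitone {d : ℕ} (Ω : Set (EuclideanSpace ℝ (Fin d)))
    (hΩ : IsCompact Ω) (hvol : 0 < (volume Ω).toReal)
    (p : EuclideanSpace ℝ (Fin d) → ℝ) (hp : Measurable p)
    (hsupp : ∀ x ∉ Ω, p x = 0) (hp1 : ∫ x, p x = 1)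
    (c C : ℝ) (hc : 0 < c)
    (hbound : ∀ᵐ x ∂(volume.restrict Ω), c ≤ p x ∧ p x ≤ C)
    (s : ℝ) (hs : s ∈ Set.Ioo (0 : ℝ) 1)
    (Z : ℕ → ℝ) (hZ : ∀ T, Z T = ∫ x in Ω, p x ^ (s ^ T)) (hZpos : ∀ T, 0 < Z T)
    (q : ℕ → EuclideanSpace ℝ (Fin d) → ℝ)
    (hqdef : ∀ T x, q T x = Ω.indicator (fun y => p y ^ (s ^ T)) x / Z T)
    (u : EuclideanSpace ℝ (Fin d) → ℝ)
    (hu : ∀ x, u x = Ω.indicator (fun _ => ((volume Ω).toReal)⁻¹) x)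
    (hint : ∀ T, Integrable (fun x => q T x * Real.log (q T x / u x))) :
    Antitone (fun T : ℕ => ∫ x, q T x * Real.log (q T x / u x)) := by
  obtain ⟨hs0, hs1⟩ := hs
  have hΩm : MeasurableSet Ω := hΩ.measurableSet
  set ν := volume.restrict Ω with hνdef
  haveI : IsFiniteMeasure ν := ⟨by
    rw [hνdef, Measure.restrict_apply_univ]; exact hΩ.measure_lt_top⟩
  set V := (volume Ω).toReal with hVdef
  have hmem : ∀ᵐ x ∂ν, x ∈ Ω := ae_restrict_mem hΩm
  have hspos : ∀ T : ℕ, (0:ℝ) < s ^ T := fun T => pow_pos hs0 T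
  -- bounds on p^(s^T)
  have hpb : ∀ T : ℕ, ∀ᵐ x ∂ν, c ^ (s ^ T) ≤ p x ^ (s ^ T) ∧ p x ^ (s ^ T) ≤ C ^ (s ^ T) := by
    intro T
    filter_upwards [hbound] with x hx
    exact ⟨Real.rpow_le_rpow hc.le hx.1 (hspos T).le,
      Real.rpow_le_rpow (hc.le.trans hx.1) hx.2 (hspos T).le⟩
  have hpm : ∀ T : ℕ, AEMeasurable (fun x => p x ^ (s ^ T)) ν :=
    fun T => (hp.pow_const _).aemeasurable
  set r : ℕ → EuclideanSpace ℝ (Fin d) → ℝ := fun T x => p x ^ (s ^ T) / Z T with hrdef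
  have hrm : ∀ T, AEMeasurable (r T) ν := fun T => (hpm T).div_const _
  have hrb : ∀ T, ∀ᵐ x ∂ν, c ^ (s ^ T) / Z T ≤ r T x ∧ r T x ≤ C ^ (s ^ T) / Z T := by
    intro T
    filter_upwards [hpb T] with x hx
    constructor
    · exact div_le_div_of_nonneg_right hx.1 (hZpos T).le
    · exact div_le_div_of_nonneg_right hx.2 (hZpos T).le
  have hlb : ∀ T : ℕ, (0:ℝ) < c ^ (s ^ T) / Z T :=
    fun T => div_pos (Real.rpow_pos_of_pos hc _) (hZpos T)
  have hZint : ∀ T, ∫ x, p x ^ (s ^ T) ∂ν = Z T := fun T => (hZ T).symm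
  have hr1 : ∀ T, ∫ x, r T x ∂ν = 1 := by
    intro T
    simp only [hrdef]
    rw [integral_div, hZint T, div_self (hZpos T).ne']
  have hil : ∀ T T' : ℕ, Integrable (fun x => r T x * Real.log (r T' x)) ν := by
    intro T T'
    refine integrable_mul_log (Hf := C ^ s ^ T / Z T) (hrm T) (hrm T') (hlb T') ?_ (hrb T')
    filter_upwards [hrb T] with x hx
    exact ⟨(hlb T).le.trans hx.1, hx.2⟩
  have hiR : ∀ T, Integrable (r T) ν := fun T => integrable_bdd (hrm T) (hrb T)
  set I : ℕ → ℝ := fun T => ∫ x, r T x * Real.log (r T x) ∂ν with hIdef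
  -- F T = I T + log V
  have hFeq : ∀ T, (∫ x, q T x * Real.log (q T x / u x)) = I T + Real.log V := by
    intro T
    have h0 : (fun x => q T x * Real.log (q T x / u x))
        = Ω.indicator (fun x => q T x * Real.log (q T x / u x)) := by
      funext x
      by_cases hx : x ∈ Ω
      · rw [Set.indicator_of_mem hx]
      · rw [Set.indicator_of_notMem hx, hqdef T x, Set.indicator_of_notMem hx]
        simp
    rw [h0, integral_indicator hΩm]
    have hcong : ∀ᵐ x ∂ν, q T x * Real.log (q T x / u x)
        = r T x * Real.log (r T x) + Real.log V * r T x := by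
      filter_upwards [hmem, hbound] with x hx hpx
      have hq : q T x = r T x := by
        rw [hqdef T x, Set.indicator_of_mem hx]
      have hux : u x = V⁻¹ := by rw [hu x, Set.indicator_of_mem hx]
      have hppos : 0 < p x := lt_of_lt_of_le hc hpx.1
      have hrpos : 0 < r T x := div_pos (Real.rpow_pos_of_pos hppos _) (hZpos T)
      rw [hq, hux, show r T x / V⁻¹ = r T x * V from by field_simp, Real.log_mul hrpos.ne' hvol.ne']
      ring
    rw [integral_congr_ae hcong, integral_add (hil T T) ((hiR T).const_mul (Real.log V)),
      integral_const_mul, hr1 T, mul_one]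
  -- main inequality between successive I's
  have key : ∀ T, I (T + 1) ≤ I T := by
    intro T
    set W := Z (T + 1) / (Z T) ^ s with hWdef
    have hWpos : 0 < W := div_pos (hZpos (T + 1)) (Real.rpow_pos_of_pos (hZpos T) s)
    have hab : ∀ᵐ x ∂ν, r (T + 1) x = r T x ^ s / W := by
      filter_upwards [hbound] with x hx
      have hppos : 0 < p x := lt_of_lt_of_le hc hx.1
      have h1 : r T x ^ s = p x ^ (s ^ (T + 1)) / (Z T) ^ s := by
        simp only [hrdef]
        rw [Real.div_rpow (Real.rpow_nonneg hppos.le _) (hZpos T).le,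
          ← Real.rpow_mul hppos.le, ← pow_succ]
      simp only [hrdef]
      rw [h1, hWdef]
      have hzs : (Z T) ^ s ≠ 0 := (Real.rpow_pos_of_pos (hZpos T) s).ne'
      field_simp
    have hlog : ∀ᵐ x ∂ν, Real.log (r (T + 1) x) = s * Real.log (r T x) - Real.log W := by
      filter_upwards [hab, hrb T] with x hx hbx
      have hrpos : 0 < r T x := lt_of_lt_of_le (hlb T) hbx.1
      rw [hx, Real.log_div (Real.rpow_pos_of_pos hrpos s).ne' hWpos.ne',
        Real.log_rpow hrpos]
    have h1 : ∫ x, r (T + 1) x * Real.log (r T x) ∂ν ≤ I (T + 1) :=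
      gibbs_ineq (hrm (T + 1)) (hrm T) (hlb (T + 1)) (hlb T) (hrb (T + 1)) (hrb T)
        (hr1 (T + 1)) (hr1 T)
    have h2 : ∫ x, r T x * Real.log (r (T + 1) x) ∂ν ≤ I T :=
      gibbs_ineq (hrm T) (hrm (T + 1)) (hlb T) (hlb (T + 1)) (hrb T) (hrb (T + 1))
        (hr1 T) (hr1 (T + 1))
    have e1 : I (T + 1) = s * (∫ x, r (T + 1) x * Real.log (r T x) ∂ν) - Real.log W := by
      have hc1 : ∀ᵐ x ∂ν, r (T + 1) x * Real.log (r (T + 1) x)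
          = s * (r (T + 1) x * Real.log (r T x)) - Real.log W * r (T + 1) x := by
        filter_upwards [hlog] with x hx
        rw [hx]; ring
      rw [hIdef]
      simp only []
      rw [integral_congr_ae hc1,
        integral_sub ((hil (T + 1) T).const_mul s) ((hiR (T + 1)).const_mul (Real.log W)),
        integral_const_mul, integral_const_mul, hr1 (T + 1), mul_one]
    have e2 : ∫ x, r T x * Real.log (r (T + 1) x) ∂ν = s * I T - Real.log W := by
      have hc2 : ∀ᵐ x ∂ν, r T x * Real.log (r (T + 1) x)
          = s * (r T x * Real.log (r T x)) - Real.log W * r T x := by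
        filter_upwards [hlog] with x hx
        rw [hx]; ring
      rw [integral_congr_ae hc2,
        integral_sub ((hil T T).const_mul s) ((hiR T).const_mul (Real.log W)),
        integral_const_mul, integral_const_mul, hr1 T, mul_one]
    nlinarith [h1, h2, e1, e2, mul_le_mul_of_nonneg_left h1 hs0.le]
  apply antitone_nat_of_succ_le
  intro T
  show (∫ x, q (T + 1) x * Real.log (q (T + 1) x / u x)) ≤ ∫ x, q T x * Real.log (q T x / u x)
  rw [hFeq (T + 1), hFeq T]
  linarith [key T]
end

section
/- In the setting above, the Shannon entropy of the concept-marginal distribution (q(A_1),…,q(A_m)) is at least that of (p(A_1),…,p(A_m)): H(q) ≥ H(p), with equality iff all p_i are equal. -/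
open Finset Real

lemma gibbs_le {m : ℕ} (w q : Fin m → ℝ) (hw : ∀ i, 0 < w i) (hq : ∀ i, 0 < q i)
    (hw1 : ∑ i, w i = 1) (hq1 : ∑ i, q i = 1) :
    ∑ i, w i * (Real.log (q i) - Real.log (w i)) ≤ 0 := by
  have h : ∀ i ∈ Finset.univ, w i * (Real.log (q i) - Real.log (w i)) ≤ q i - w i := by
    intro i _
    rw [← Real.log_div (hq i).ne' (hw i).ne']
    calc w i * Real.log (q i / w i) ≤ w i * (q i / w i - 1) :=
          mul_le_mul_of_nonneg_left (Real.log_le_sub_one_of_pos (div_pos (hq i) (hw i))) (hw i).le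
      _ = q i - w i := by rw [mul_sub, mul_one, mul_div_cancel₀ _ (hw i).ne']
  calc ∑ i, w i * (Real.log (q i) - Real.log (w i)) ≤ ∑ i, (q i - w i) :=
        Finset.sum_le_sum h
    _ = 0 := by rw [Finset.sum_sub_distrib, hw1, hq1]; ring

lemma gibbs_lt {m : ℕ} (w q : Fin m → ℝ) (hw : ∀ i, 0 < w i) (hq : ∀ i, 0 < q i)
    (hw1 : ∑ i, w i = 1) (hq1 : ∑ i, q i = 1) (j : Fin m) (hj : q j ≠ w j) :
    ∑ i, w i * (Real.log (q i) - Real.log (w i)) < 0 := by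
  have h : ∀ i ∈ Finset.univ, w i * (Real.log (q i) - Real.log (w i)) ≤ q i - w i := by
    intro i _
    rw [← Real.log_div (hq i).ne' (hw i).ne']
    calc w i * Real.log (q i / w i) ≤ w i * (q i / w i - 1) :=
          mul_le_mul_of_nonneg_left (Real.log_le_sub_one_of_pos (div_pos (hq i) (hw i))) (hw i).le
      _ = q i - w i := by rw [mul_sub, mul_one, mul_div_cancel₀ _ (hw i).ne']
  have hstrict : w j * (Real.log (q j) - Real.log (w j)) < q j - w j := by
    rw [← Real.log_div (hq j).ne' (hw j).ne']
    have hne : q j / w j ≠ 1 := by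
      intro h
      exact hj (by rwa [div_eq_one_iff_eq (hw j).ne'] at h)
    calc w j * Real.log (q j / w j) < w j * (q j / w j - 1) :=
          mul_lt_mul_of_pos_left (Real.log_lt_sub_one_of_pos (div_pos (hq j) (hw j)) hne) (hw j)
      _ = q j - w j := by rw [mul_sub, mul_one, mul_div_cancel₀ _ (hw j).ne']
  calc ∑ i, w i * (Real.log (q i) - Real.log (w i)) < ∑ i, (q i - w i) :=
        Finset.sum_lt_sum h ⟨j, Finset.mem_univ j, hstrict⟩
    _ = 0 := by rw [Finset.sum_sub_distrib, hw1, hq1]; ring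

/-- Discrete analogue of Lemma 1: the Shannon entropy of the tempered concept-marginal
distribution is at least that of the original one, with equality iff all `pᵢ` are
equal. -/
theorem tempering_entropy_ge {m : ℕ} (hm : 0 < m)
    (v : ℝ) (hv : 0 < v)
    (p : Fin m → ℝ) (hp : ∀ i, 0 < p i) (hp1 : ∑ i : Fin m, p i * v = 1)
    (t : ℝ) (ht : t ∈ Set.Ioo (0 : ℝ) 1)
    (pA qA : Fin m → ℝ)
    (hpA : ∀ i, pA i = p i * v)
    (hqA : ∀ i, qA i = p i ^ t / ∑ j : Fin m, p j ^ t) :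
    (-∑ i : Fin m, pA i * Real.log (pA i)) ≤ (-∑ i : Fin m, qA i * Real.log (qA i)) ∧
    ((-∑ i : Fin m, qA i * Real.log (qA i)) = (-∑ i : Fin m, pA i * Real.log (pA i)) ↔
      ∀ i j : Fin m, p i = p j) := by
  obtain ⟨ht0, ht1⟩ := ht
  set S : ℝ := ∑ j : Fin m, p j ^ t with hS_def
  have hS : 0 < S := Finset.sum_pos (fun j _ => Real.rpow_pos_of_pos (hp j) t)
    (Finset.univ_nonempty_iff.mpr (Fin.pos_iff_nonempty.mp hm))
  have hpA0 : ∀ i, 0 < pA i := fun i => by rw [hpA]; exact mul_pos (hp i) hv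
  have hqA0 : ∀ i, 0 < qA i := fun i => by
    rw [hqA]; exact div_pos (Real.rpow_pos_of_pos (hp i) t) hS
  have hpAsum : ∑ i, pA i = 1 := by simp_rw [hpA]; exact hp1
  have hqAsum : ∑ i, qA i = 1 := by
    simp_rw [hqA]; rw [← Finset.sum_div, ← hS_def, div_self hS.ne']
  set C : ℝ := t * Real.log v + Real.log S with hC_def
  have hlogq : ∀ i, Real.log (qA i) = t * Real.log (p i) - Real.log S := by
    intro i
    rw [hqA, Real.log_div (Real.rpow_pos_of_pos (hp i) t).ne' hS.ne',
      Real.log_rpow (hp i)]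
  have hlogpA : ∀ i, Real.log (pA i) = Real.log (p i) + Real.log v := by
    intro i; rw [hpA, Real.log_mul (hp i).ne' hv.ne']
  have hd1 : ∀ i, Real.log (qA i) - Real.log (pA i) = (t - 1) * Real.log (pA i) - C := by
    intro i; rw [hlogq i, hlogpA i, hC_def]; ring
  have hd2 : ∀ i, Real.log (pA i) - Real.log (qA i) = ((1 - t) * Real.log (qA i) + C) / t := by
    intro i
    rw [eq_div_iff ht0.ne', hlogq i, hlogpA i, hC_def]; ring
  set Lp : ℝ := ∑ i, pA i * Real.log (pA i) with hLp
  set Lq : ℝ := ∑ i, qA i * Real.log (qA i) with hLq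
  have hD1eq : ∑ i, pA i * (Real.log (qA i) - Real.log (pA i)) = (t - 1) * Lp - C := by
    calc ∑ i, pA i * (Real.log (qA i) - Real.log (pA i))
        = ∑ i, ((t - 1) * (pA i * Real.log (pA i)) - C * pA i) := by
          apply Finset.sum_congr rfl; intro i _; rw [hd1 i]; ring
      _ = (t - 1) * Lp - C * 1 := by
          rw [Finset.sum_sub_distrib, ← Finset.mul_sum, ← Finset.mul_sum, hpAsum, hLp]
      _ = (t - 1) * Lp - C := by ring
  have hD2eq : ∑ i, qA i * (Real.log (pA i) - Real.log (qA i)) = ((1 - t) * Lq + C) / t := by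
    calc ∑ i, qA i * (Real.log (pA i) - Real.log (qA i))
        = ∑ i, (((1 - t) * (qA i * Real.log (qA i)) + C * qA i) / t) := by
          apply Finset.sum_congr rfl; intro i _; rw [hd2 i]; field_simp
      _ = ((1 - t) * Lq + C * 1) / t := by
          rw [← Finset.sum_div, Finset.sum_add_distrib, ← Finset.mul_sum, ← Finset.mul_sum,
            hqAsum, hLq]
      _ = ((1 - t) * Lq + C) / t := by ring
  have key2 : C ≤ (t - 1) * Lq := by
    have h := gibbs_le qA pA hqA0 hpA0 hqAsum hpAsum
    rw [hD2eq] at h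
    have := (div_nonpos_iff.mp h)
    have h' : (1 - t) * Lq + C ≤ 0 := by
      rcases this with ⟨h1, h2⟩ | ⟨h1, h2⟩
      · linarith
      · exact h1
    linarith
  have key1 : (t - 1) * Lp ≤ C := by
    have h := gibbs_le pA qA hpA0 hqA0 hpAsum hqAsum
    rw [hD1eq] at h; linarith
  have hle : Lq ≤ Lp := by nlinarith [key1, key2]
  refine ⟨by linarith, ?_, ?_⟩
  · -- equality → all p equal
    intro heq
    have hLqLp : Lq = Lp := by linarith
    by_cases hall : ∀ i, qA i = pA i
    · -- pA = qA ⇒ p constant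
      intro i j
      have hi : p i * v * S = p i ^ t := by
        have := hall i; rw [hqA, hpA, div_eq_iff hS.ne'] at this
        linarith [this]
      have hj : p j * v * S = p j ^ t := by
        have := hall j; rw [hqA, hpA, div_eq_iff hS.ne'] at this
        linarith [this]
      -- p i ^ (t-1) = v * S = p j ^ (t-1)
      have hi' : p i ^ (t - 1) = v * S := by
        rw [Real.rpow_sub (hp i), Real.rpow_one, div_eq_iff (hp i).ne', ← hi]; ring
      have hj' : p j ^ (t - 1) = v * S := by
        rw [Real.rpow_sub (hp j), Real.rpow_one, div_eq_iff (hp j).ne', ← hj]; ring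
      have hlog : (t - 1) * Real.log (p i) = (t - 1) * Real.log (p j) := by
        rw [← Real.log_rpow (hp i), ← Real.log_rpow (hp j), hi', hj']
      have : Real.log (p i) = Real.log (p j) :=
        mul_left_cancel₀ (by linarith : t - 1 ≠ 0) hlog
      rw [← Real.exp_log (hp i), ← Real.exp_log (hp j), this]
    · push_neg at hall
      obtain ⟨j, hj⟩ := hall
      have h := gibbs_lt pA qA hpA0 hqA0 hpAsum hqAsum j hj
      rw [hD1eq] at h
      nlinarith [key2, h, hLqLp]
  · -- all p equal → equality
    intro hall
    have hq_eq_p : ∀ i, qA i = pA i := by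
      intro i
      have hc : ∀ j, p j = p i := fun j => hall j i
      have hsum : (m : ℝ) * (p i * v) = 1 := by
        rw [← hp1]
        rw [Finset.sum_congr rfl (fun j _ => by rw [hc j])]
        simp [Finset.card_univ, mul_comm]
      have hSval : S = (m : ℝ) * p i ^ t := by
        rw [hS_def, Finset.sum_congr rfl (fun j _ => by rw [hc j])]
        simp [Finset.card_univ]
      have hm' : (0 : ℝ) < m := Nat.cast_pos.mpr hm
      rw [hqA, hpA, hSval]
      have hpt : (0:ℝ) < p i ^ t := Real.rpow_pos_of_pos (hp i) t
      rw [div_eq_iff (mul_ne_zero hm'.ne' hpt.ne')]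
      have : p i * v = 1 / m := by field_simp at hsum ⊢; linarith
      rw [this]; field_simp
    have : Lq = Lp := by
      rw [hLq, hLp]; exact Finset.sum_congr rfl (fun i _ => by rw [hq_eq_p i])
    linarith
end

section
/- For probability vectors, the map t ↦ H(p^{(t)}) where p^{(t)}_i = p_i^t/∑_j p_j^t is nonincreasing in t on (0,∞); in particular for 0 < t < 1, H(p^{(t)}) ≥ H(p^{(1)}) = H(p). -/
/-!
Write `L = log p` and `Z t = ∑ⱼ pⱼᵗ`, so that `log p⁽ᵗ⁾ = t L - log Z t` and
`H(p⁽ᵗ⁾) = log Z t - t 𝔼_{p⁽ᵗ⁾} L`. For `t₁ < t₂`, Gibbs' inequality applied to the pairs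
`(p⁽ᵗ¹⁾, p⁽ᵗ²⁾)` and `(p⁽ᵗ²⁾, p⁽ᵗ¹⁾)` sandwiches `log Z t₂ - log Z t₁` between
`(t₂ - t₁) 𝔼_{p⁽ᵗ¹⁾} L` and `(t₂ - t₁) 𝔼_{p⁽ᵗ²⁾} L`. Hence the mean of `L` increases along the path,
and the upper bound turns `H(p⁽ᵗ²⁾) ≤ H(p⁽ᵗ¹⁾)` into `t₁ 𝔼_{p⁽ᵗ¹⁾} L ≤ t₁ 𝔼_{p⁽ᵗ²⁾} L`.
-/

open Finset Real

section Escort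

variable {ι : Type*} [Fintype ι]

noncomputable def entropy (w : ι → ℝ) : ℝ := -∑ i, w i * log (w i)

noncomputable def escort (t : ℝ) (p : ι → ℝ) (i : ι) : ℝ := p i ^ t / ∑ j, p j ^ t

theorem sum_mul_log_le_sum_mul_log {q w : ι → ℝ} (hq : ∀ i, 0 < q i) (hw : ∀ i, 0 < w i)
    (hwq : ∑ i, w i ≤ ∑ i, q i) :
    ∑ i, q i * log (w i) ≤ ∑ i, q i * log (q i) := by
  have hterm : ∀ i, q i * log (w i) - q i * log (q i) ≤ w i - q i := fun i => by
    have h := mul_le_mul_of_nonneg_left (log_le_sub_one_of_pos (div_pos (hw i) (hq i))) (hq i).le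
    rwa [log_div (hw i).ne' (hq i).ne', mul_sub, mul_sub, mul_div_cancel₀ _ (hq i).ne',
      mul_one] at h
  have hsum := sum_le_sum fun i (_ : i ∈ univ) => hterm i
  simp only [sum_sub_distrib] at hsum
  linarith

variable {p : ι → ℝ}

theorem sum_rpow_pos [Nonempty ι] (hp : ∀ i, 0 < p i) (t : ℝ) : 0 < ∑ j, p j ^ t :=
  sum_pos (fun j _ => rpow_pos_of_pos (hp j) t) univ_nonempty

theorem escort_pos (hp : ∀ i, 0 < p i) (t : ℝ) (i : ι) : 0 < escort t p i :=
  have : Nonempty ι := ⟨i⟩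
  div_pos (rpow_pos_of_pos (hp i) t) (sum_rpow_pos hp t)

theorem sum_escort [Nonempty ι] (hp : ∀ i, 0 < p i) (t : ℝ) : ∑ i, escort t p i = 1 := by
  simp only [escort, ← sum_div, div_self (sum_rpow_pos hp t).ne']

theorem escort_one (hp1 : ∑ i, p i = 1) : escort 1 p = p := by
  funext i
  simp only [escort, rpow_one, hp1, div_one]

theorem log_escort (hp : ∀ i, 0 < p i) (t : ℝ) (i : ι) :
    log (escort t p i) = t * log (p i) - log (∑ j, p j ^ t) := by
  have : Nonempty ι := ⟨i⟩
  rw [escort, log_div (rpow_pos_of_pos (hp i) t).ne' (sum_rpow_pos hp t).ne', log_rpow (hp i)]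

theorem sum_mul_log_escort (hp : ∀ i, 0 < p i) (t : ℝ) {w : ι → ℝ} (hw1 : ∑ i, w i = 1) :
    ∑ i, w i * log (escort t p i) = t * ∑ i, w i * log (p i) - log (∑ j, p j ^ t) := by
  simp only [log_escort hp, mul_sub, sum_sub_distrib, ← sum_mul, hw1, one_mul, mul_sum]
  exact congrArg (· - _) (sum_congr rfl fun i _ => by ring)

theorem entropy_escort_antitoneOn [Nonempty ι] (hp : ∀ i, 0 < p i) :
    AntitoneOn (fun t => entropy (escort t p)) (Set.Ici 0) := by
  intro t₁ (ht₁ : 0 ≤ t₁) t₂ _ ht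
  rcases ht.eq_or_lt with rfl | hlt
  · rfl
  set q := escort t₁ p
  set w := escort t₂ p
  have hq1 : ∑ i, q i = 1 := sum_escort hp t₁
  have hw1 : ∑ i, w i = 1 := sum_escort hp t₂
  have gibbs_qw := sum_mul_log_le_sum_mul_log (escort_pos hp t₁) (escort_pos hp t₂)
    (hw1.trans hq1.symm).le
  have gibbs_wq := sum_mul_log_le_sum_mul_log (escort_pos hp t₂) (escort_pos hp t₁)
    (hq1.trans hw1.symm).le
  rw [sum_mul_log_escort hp t₂ hq1, sum_mul_log_escort hp t₁ hq1] at gibbs_qw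
  rw [sum_mul_log_escort hp t₁ hw1, sum_mul_log_escort hp t₂ hw1] at gibbs_wq
  have hmean : ∑ i, q i * log (p i) ≤ ∑ i, w i * log (p i) :=
    le_of_mul_le_mul_left (by linarith) (sub_pos.mpr hlt)
  show -∑ i, w i * log (w i) ≤ -∑ i, q i * log (q i)
  rw [sum_mul_log_escort hp t₂ hw1, sum_mul_log_escort hp t₁ hq1]
  linarith [mul_le_mul_of_nonneg_left hmean ht₁]

end Escort

/-- Entropy is nonincreasing along the tempering path `t ↦ p⁽ᵗ⁾` with
`p⁽ᵗ⁾ᵢ = pᵢᵗ / ∑ⱼ pⱼᵗ`; in particular for `0 < t < 1`,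
`H(p⁽ᵗ⁾) ≥ H(p⁽¹⁾) = H(p)`. -/
theorem entropy_antitone_along_tempering {m : ℕ} (hm : 0 < m)
    (p : Fin m → ℝ) (hp : ∀ i, 0 < p i) (hp1 : ∑ i : Fin m, p i = 1)
    (pt : ℝ → Fin m → ℝ)
    (hpt : ∀ t i, pt t i = p i ^ t / ∑ j : Fin m, p j ^ t)
    (H : (Fin m → ℝ) → ℝ)
    (hH : ∀ w, H w = -∑ i : Fin m, w i * Real.log (w i)) :
    (∀ t₁ t₂ : ℝ, 0 < t₁ → t₁ ≤ t₂ → H (pt t₂) ≤ H (pt t₁)) ∧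
    ∀ t ∈ Set.Ioo (0 : ℝ) 1, H p ≤ H (pt t) := by
  have : Nonempty (Fin m) := ⟨⟨0, hm⟩⟩
  have hpt : pt = fun t => escort t p := funext fun t => funext (hpt t)
  have hH : H = entropy := funext hH
  subst hpt hH
  have hanti := entropy_escort_antitoneOn hp
  refine ⟨fun t₁ t₂ ht₁ ht => hanti ht₁.le (ht₁.le.trans ht) ht, fun t ht => ?_⟩
  simpa only [escort_one hp1] using hanti ht.1.le (Set.mem_Ici.2 zero_le_one) ht.2.le
end
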